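/- arXiv:2505.05277 — 2 statements merged into one kernel-verified Lean document; each statement's English description precedes it below -/
import Mathlib

section
/- Let d ≥ 2 and let Ω ⊆ ℝ^d be an open, bounded, nonempty set. Then the infimum of λ₁^g(Ω) over all g ∈ L^∞_+ equals λ₁(Ω), i.e. inf{ λ₁^g(Ω) : g measurable, 0 < g(x) ≤ 1 for a.e. x ∈ ℝ^d } = λ₁(Ω). -/
/-! `λ₁ ≤ λ₁^g` as soon as some trial function is orthogonal to `g`; since `g > 0`, a suitable
combination of two cones with disjoint supports is. Conversely, take `u` with `R(u)` close to
`λ₁` and `u p > 0`, and subtract a steep cone supported in a small ball near `∂Ω`, where `u` is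
small. The result changes sign, and since the cone has small `H¹` norm its Rayleigh quotient is
barely larger. A sign-changing `u` is orthogonal to a weight `g ∈ L^∞₊` that is constant on
`{u ≥ 0}` and on `{u < 0}`, so `λ₁^g ≤ R(u)`. -/

open MeasureTheory Metric Set Filter

open scoped Classical ENNReal

noncomputable section

/-- The Rayleigh quotient of `u : ℝ^d → ℝ`. -/
def rayleigh (d : ℕ) (u : EuclideanSpace ℝ (Fin d) → ℝ) : ℝ :=
  (∫ x, ‖gradient u x‖ ^ 2) / (∫ x, (u x) ^ 2)

/-- A trial function for the Dirichlet eigenvalue on `Ω`: Lipschitz, vanishing outside `Ω`,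
and not almost everywhere zero. -/
def IsDirTrial (d : ℕ) (Ω : Set (EuclideanSpace ℝ (Fin d)))
    (u : EuclideanSpace ℝ (Fin d) → ℝ) : Prop :=
  (∃ K, LipschitzWith K u) ∧ (∀ x ∉ Ω, u x = 0) ∧ ¬ (u =ᵐ[volume] fun _ => (0 : ℝ))

/-- The first Dirichlet eigenvalue of `Ω`. -/
def dirichletEV (d : ℕ) (Ω : Set (EuclideanSpace ℝ (Fin d))) : ℝ :=
  sInf { r | ∃ u, IsDirTrial d Ω u ∧ rayleigh d u = r }

/-- The first twisted eigenvalue of `Ω` with orthogonality constraint `g`. -/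
def twistedEV (d : ℕ) (Ω : Set (EuclideanSpace ℝ (Fin d)))
    (g : EuclideanSpace ℝ (Fin d) → ℝ) : ℝ :=
  sInf { r | ∃ u, IsDirTrial d Ω u ∧ (∫ x, u x * g x) = 0 ∧ rayleigh d u = r }

/-- `u` is a minimizer for the first twisted eigenvalue `λ₁^g(Ω)`. -/
def IsTwistedMin (d : ℕ) (Ω : Set (EuclideanSpace ℝ (Fin d)))
    (g u : EuclideanSpace ℝ (Fin d) → ℝ) : Prop :=
  IsDirTrial d Ω u ∧ (∫ x, u x * g x) = 0 ∧ rayleigh d u = twistedEV d Ω g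

/-- The bang-bang function equal to `1` on `Bm` and `α` elsewhere. -/
def chiBang (d : ℕ) (α : ℝ) (Bm : Set (EuclideanSpace ℝ (Fin d))) :
    EuclideanSpace ℝ (Fin d) → ℝ :=
  fun x => if x ∈ Bm then 1 else α

open scoped NNReal Topology

lemma two_mul_mul_le_mul_sq_add_inv_mul_sq {δ : ℝ} (hδ : 0 < δ) (a b : ℝ) :
    2 * a * b ≤ δ * a ^ 2 + δ⁻¹ * b ^ 2 := by
  have h : δ * a ^ 2 + δ⁻¹ * b ^ 2 - 2 * a * b = (δ * a - b) ^ 2 / δ := by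
    field_simp
    ring
  have : 0 ≤ (δ * a - b) ^ 2 / δ := by positivity
  linarith

lemma LipschitzWith.const_mul {α : Type*} [PseudoEMetricSpace α] {K : ℝ≥0} {f : α → ℝ}
    (hf : LipschitzWith K f) (a : ℝ) : LipschitzWith (‖a‖₊ * K) fun x => a * f x :=
  (lipschitzWith_smul a).comp hf

lemma Bornology.IsBounded.hasCompactSupport {X : Type*} [PseudoMetricSpace X] [ProperSpace X]
    {Ω : Set X} (hΩb : Bornology.IsBounded Ω) {u : X → ℝ} (hΩu : ∀ x ∉ Ω, u x = 0) :
    HasCompactSupport u :=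
  .intro hΩb.isCompact_closure fun x hx => hΩu x fun h => hx (subset_closure h)

section Integrals

variable {X : Type*} [MeasurableSpace X] {μ : Measure X}

lemma integral_le_measureReal_mul {f : X → ℝ} {s : Set X} {C : ℝ} (hs : MeasurableSet s)
    (hμs : μ s ≠ ∞) (hf0 : ∀ x, 0 ≤ f x) (hfC : ∀ x, f x ≤ s.indicator (fun _ => C) x) :
    ∫ x, f x ∂μ ≤ μ.real s * C := by
  calc ∫ x, f x ∂μ ≤ ∫ x, s.indicator (fun _ => C) x ∂μ :=
        integral_mono_of_nonneg (.of_forall hf0)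
          ((integrable_indicator_iff hs).2 (integrableOn_const hμs)) (.of_forall hfC)
    _ = μ.real s * C := integral_indicator_const C hs

variable [TopologicalSpace X] [OpensMeasurableSpace X] [IsFiniteMeasureOnCompacts μ]

lemma integral_sub_sq_ge {u v : X → ℝ} (hu : Continuous u) (hv : Continuous v)
    (hcu : HasCompactSupport u) (hcv : HasCompactSupport v) {δ : ℝ} (hδ : 0 < δ) :
    (1 - δ) * ∫ x, u x ^ 2 ∂μ - (1 + δ⁻¹) * ∫ x, v x ^ 2 ∂μ ≤ ∫ x, (u x - v x) ^ 2 ∂μ := by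
  have hsq {w : X → ℝ} (hw : Continuous w) (hcw : HasCompactSupport w) :
      Integrable (fun x => w x ^ 2) μ :=
    (hw.pow 2).integrable_of_hasCompactSupport (hcw.comp_left (zero_pow two_ne_zero))
  rw [← integral_const_mul, ← integral_const_mul,
    ← integral_sub ((hsq hu hcu).const_mul _) ((hsq hv hcv).const_mul _)]
  refine integral_mono (((hsq hu hcu).const_mul _).sub ((hsq hv hcv).const_mul _))
    (hsq (hu.sub hv) (hcu.sub hcv)) fun x => ?_
  have := two_mul_mul_le_mul_sq_add_inv_mul_sq hδ (u x) (v x)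
  nlinarith [sq_nonneg (v x)]

lemma integrable_mul_of_ae_le_one {φ g : X → ℝ} (hφ : Continuous φ) (hcφ : HasCompactSupport φ)
    (hgm : AEStronglyMeasurable g μ) (hg : ∀ᵐ x ∂μ, 0 < g x ∧ g x ≤ 1) :
    Integrable (fun x => φ x * g x) μ :=
  (hφ.integrable_of_hasCompactSupport hcφ).mul_bdd hgm
    (hg.mono fun x hx => by rw [Real.norm_of_nonneg hx.1.le]; exact hx.2)

variable [μ.IsOpenPosMeasure]

lemma integral_mul_pos_of_ae_pos {φ g : X → ℝ} (hφ : Continuous φ) (hcφ : HasCompactSupport φ)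
    (hφ0 : 0 ≤ φ) {p : X} (hp : φ p ≠ 0) (hgm : AEStronglyMeasurable g μ)
    (hg : ∀ᵐ x ∂μ, 0 < g x ∧ g x ≤ 1) : 0 < ∫ x, φ x * g x ∂μ := by
  rw [integral_pos_iff_support_of_nonneg_ae (hg.mono fun x hx => mul_nonneg (hφ0 x) hx.1.le)
    (integrable_mul_of_ae_le_one hφ hcφ hgm hg)]
  refine (hφ.isOpen_support.measure_pos μ ⟨p, hp⟩).trans_le (measure_mono_ae ?_)
  filter_upwards [hg] with x hx hφx
  exact mul_ne_zero hφx hx.1.ne'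

lemma exists_weight_integral_mul_eq_zero {u : X → ℝ} (hu : Continuous u)
    (hcu : HasCompactSupport u) {p q : X} (hp : 0 < u p) (hq : u q < 0) :
    ∃ g : X → ℝ, Measurable g ∧ (∀ x, 0 < g x ∧ g x ≤ 1) ∧ ∫ x, u x * g x ∂μ = 0 := by
  have hpos {w : X → ℝ} (hw : Continuous w) (hcw : HasCompactSupport w) {a : X} (ha : 0 < w a) :
      0 < ∫ x, max (w x) 0 ∂μ :=
    (hw.max continuous_const).integral_pos_of_hasCompactSupport_nonneg_nonzero (x := a)
      (hcw.comp_left (g := fun y => max y 0) (max_self 0)) (fun _ => le_max_right _ _)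
      (lt_max_of_lt_left ha).ne'
  set A := ∫ x, max (u x) 0 ∂μ
  set B := ∫ x, max (-u x) 0 ∂μ
  have hA : 0 < A := hpos hu hcu hp
  have hB : 0 < B := hpos hu.neg hcu.neg (neg_pos.2 hq)
  -- the weights `B / M ≤ 1` on `{0 ≤ u}` and `A / M ≤ 1` on `{u < 0}` balance `A` against `B`
  set M := max A B
  have hM : 0 < M := lt_max_of_lt_left hA
  refine ⟨fun x => if 0 ≤ u x then B / M else A / M,
    .ite (measurableSet_le measurable_const hu.measurable) measurable_const measurable_const,
    fun x => ?_, ?_⟩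
  · dsimp only
    split_ifs
    exacts [⟨by positivity, div_le_one_of_le₀ (le_max_right A B) hM.le⟩,
      ⟨by positivity, div_le_one_of_le₀ (le_max_left A B) hM.le⟩]
  · have hsplit : ∀ x, u x * (if 0 ≤ u x then B / M else A / M)
        = B / M * max (u x) 0 - A / M * max (-u x) 0 := fun x => by
      rcases le_or_gt 0 (u x) with h | h
      · rw [if_pos h, max_eq_left h, max_eq_right (neg_nonpos.2 h)]
        ring
      · rw [if_neg h.not_ge, max_eq_right h.le, max_eq_left (neg_nonneg.2 h.le)]
        ring
    have hi {w : X → ℝ} (hw : Continuous w) (hcw : HasCompactSupport w) :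
        Integrable (fun x => max (w x) 0) μ :=
      (hw.max continuous_const).integrable_of_hasCompactSupport
        (hcw.comp_left (g := fun y => max y 0) (max_self 0))
    rw [integral_congr_ae (.of_forall hsplit), integral_sub ((hi hu hcu).const_mul _)
      ((hi (w := fun x => -u x) hu.neg hcu.neg).const_mul _), integral_const_mul,
      integral_const_mul]
    ring

end Integrals

section Lipschitz

variable {E : Type*} [NormedAddCommGroup E] [NormedSpace ℝ E] {K : ℝ≥0} {f : E → ℝ}

lemma LipschitzWith.norm_fderiv_sq_le_indicator (hf : LipschitzWith K f) {s : Set E}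
    (hs : tsupport f ⊆ s) (x : E) :
    ‖fderiv ℝ f x‖ ^ 2 ≤ s.indicator (fun _ => (K : ℝ) ^ 2) x := by
  by_cases hx : x ∈ s
  · rw [indicator_of_mem hx]
    exact pow_le_pow_left₀ (norm_nonneg _) (norm_fderiv_le_of_lipschitz ℝ hf) 2
  · rw [indicator_of_notMem hx,
      Function.notMem_support.1 fun h => hx (hs (support_fderiv_subset ℝ h))]
    simp

variable [MeasurableSpace E] {μ : Measure E}

lemma LipschitzWith.integral_norm_fderiv_sq_le (hf : LipschitzWith K f) {s : Set E}
    (hs : MeasurableSet s) (hμs : μ s ≠ ∞) (hfs : tsupport f ⊆ s) :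
    ∫ x, ‖fderiv ℝ f x‖ ^ 2 ∂μ ≤ μ.real s * K ^ 2 :=
  integral_le_measureReal_mul hs hμs (fun _ => sq_nonneg _) (hf.norm_fderiv_sq_le_indicator hfs)

variable [BorelSpace E]

lemma LipschitzWith.integrable_norm_fderiv_sq [IsFiniteMeasureOnCompacts μ]
    (hf : LipschitzWith K f) (hc : HasCompactSupport f) :
    Integrable (fun x => ‖fderiv ℝ f x‖ ^ 2) μ := by
  refine Integrable.mono' ((integrable_indicator_iff hc.measurableSet).2
    (integrableOn_const (C := (K : ℝ) ^ 2) hc.isCompact.measure_lt_top.ne))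
    ((measurable_fderiv ℝ f).norm.pow_const 2).aestronglyMeasurable (.of_forall fun x => ?_)
  rw [Real.norm_of_nonneg (sq_nonneg _)]
  exact hf.norm_fderiv_sq_le_indicator subset_rfl x

end Lipschitz

section RayleighQuotient

variable {E : Type*} [NormedAddCommGroup E] [NormedSpace ℝ E] [MeasurableSpace E]

def rayleighQuotient (μ : Measure E) (u : E → ℝ) : ℝ :=
  (∫ x, ‖fderiv ℝ u x‖ ^ 2 ∂μ) / ∫ x, u x ^ 2 ∂μ

lemma rayleighQuotient_neg (μ : Measure E) (u : E → ℝ) :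
    rayleighQuotient μ (fun x => -u x) = rayleighQuotient μ u := by
  simp only [rayleighQuotient, fderiv_fun_neg, norm_neg, neg_sq]

variable [BorelSpace E] [FiniteDimensional ℝ E] {μ : Measure E} [μ.IsAddHaarMeasure]
  {u v : E → ℝ} {K K' : ℝ≥0}

lemma integral_norm_fderiv_sub_sq_le (hu : LipschitzWith K u) (hv : LipschitzWith K' v)
    (hcu : HasCompactSupport u) (hcv : HasCompactSupport v) {δ : ℝ} (hδ : 0 < δ) :
    ∫ x, ‖fderiv ℝ (fun y => u y - v y) x‖ ^ 2 ∂μ ≤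
      (1 + δ) * ∫ x, ‖fderiv ℝ u x‖ ^ 2 ∂μ + (1 + δ⁻¹) * ∫ x, ‖fderiv ℝ v x‖ ^ 2 ∂μ := by
  have hui := (hu.integrable_norm_fderiv_sq (μ := μ) hcu).const_mul (1 + δ)
  have hvi := (hv.integrable_norm_fderiv_sq (μ := μ) hcv).const_mul (1 + δ⁻¹)
  rw [← integral_const_mul, ← integral_const_mul, ← integral_add hui hvi]
  refine integral_mono_of_nonneg (.of_forall fun _ => sq_nonneg _) (hui.add hvi) ?_
  filter_upwards [hu.ae_differentiableAt (μ := μ), hv.ae_differentiableAt (μ := μ)] with x hux hvx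
  rw [fderiv_fun_sub hux hvx]
  have htri := norm_sub_le (fderiv ℝ u x) (fderiv ℝ v x)
  have := two_mul_mul_le_mul_sq_add_inv_mul_sq hδ ‖fderiv ℝ u x‖ ‖fderiv ℝ v x‖
  nlinarith [norm_nonneg (fderiv ℝ u x - fderiv ℝ v x)]

lemma exists_pos_forall_rayleighQuotient_sub_le (hu : LipschitzWith K u)
    (hcu : HasCompactSupport u) (hD : 0 < ∫ x, u x ^ 2 ∂μ) {ε : ℝ} (hε : 0 < ε) :
    ∃ η > 0, ∀ (K' : ℝ≥0) (v : E → ℝ), LipschitzWith K' v → HasCompactSupport v →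
      ∫ x, ‖fderiv ℝ v x‖ ^ 2 ∂μ ≤ η → ∫ x, v x ^ 2 ∂μ ≤ η →
      rayleighQuotient μ (fun x => u x - v x) ≤ rayleighQuotient μ u + ε := by
  set N := ∫ x, ‖fderiv ℝ u x‖ ^ 2 ∂μ
  set D := ∫ x, u x ^ 2 ∂μ
  have hN : 0 ≤ N := integral_nonneg fun _ => sq_nonneg _
  have hden : ContinuousAt (fun δ : ℝ => (1 - δ) * D - δ) 0 := by fun_prop
  have hbound : ContinuousAt (fun δ : ℝ => ((1 + δ) * N + δ) / ((1 - δ) * D - δ)) 0 :=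
    (by fun_prop : ContinuousAt (fun δ : ℝ => (1 + δ) * N + δ) 0).div hden (by simpa using hD.ne')
  have hev : ∀ᶠ δ in 𝓝 (0 : ℝ),
      ((1 + δ) * N + δ) / ((1 - δ) * D - δ) < N / D + ε ∧ 0 < (1 - δ) * D - δ :=
    (hbound.eventually (gt_mem_nhds (by simpa using hε))).and
      (hden.eventually (lt_mem_nhds (by simpa using hD)))
  obtain ⟨δ, ⟨hlt, hdenpos⟩, hδ : 0 < δ⟩ :=
    ((hev.filter_mono nhdsWithin_le_nhds).and (self_mem_nhdsWithin (s := Ioi 0))).exists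
  -- with this `η` the perturbation costs exactly `δ` in numerator and denominator
  refine ⟨δ / (1 + δ⁻¹), by positivity, fun K' v hv hcv hvN hvD => ?_⟩
  have hη : (1 + δ⁻¹) * (δ / (1 + δ⁻¹)) = δ := mul_div_cancel₀ _ (by positivity)
  have hC : (0 : ℝ) ≤ 1 + δ⁻¹ := by positivity
  have hN' : ∫ x, ‖fderiv ℝ (fun y => u y - v y) x‖ ^ 2 ∂μ ≤ (1 + δ) * N + δ := by
    have := integral_norm_fderiv_sub_sq_le (μ := μ) hu hv hcu hcv hδ
    nlinarith [mul_le_mul_of_nonneg_left hvN hC]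
  have hD' : (1 - δ) * D - δ ≤ ∫ x, (u x - v x) ^ 2 ∂μ := by
    have := integral_sub_sq_ge (μ := μ) hu.continuous hv.continuous hcu hcv hδ
    nlinarith [mul_le_mul_of_nonneg_left hvD hC]
  calc rayleighQuotient μ (fun x => u x - v x)
      ≤ ((1 + δ) * N + δ) / ((1 - δ) * D - δ) := div_le_div₀ (by positivity) hN' hdenpos hD'
    _ ≤ rayleighQuotient μ u + ε := hlt.le

end RayleighQuotient

section Cone

variable {X : Type*} [PseudoMetricSpace X] {c x : X} {r : ℝ}

def cone (c : X) (r : ℝ) (x : X) : ℝ := max (r - dist x c) 0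

lemma lipschitzWith_cone (c : X) (r : ℝ) : LipschitzWith 1 (cone c r) := by
  have h := ((LipschitzWith.const r).sub (LipschitzWith.dist_left c)).max_const 0
  rwa [zero_add] at h

lemma cone_nonneg : 0 ≤ cone c r x := le_max_right _ _

lemma cone_self (hr : 0 ≤ r) : cone c r c = r := by simp [cone, hr]

lemma cone_le (hr : 0 ≤ r) : cone c r x ≤ r :=
  max_le (by linarith [dist_nonneg (x := x) (y := c)]) hr

lemma cone_eq_zero (h : r ≤ dist x c) : cone c r x = 0 := max_eq_right (by linarith)

lemma support_cone_subset : Function.support (cone c r) ⊆ ball c r := fun _ hx =>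
  not_le.1 fun h => hx (cone_eq_zero h)

lemma tsupport_cone_subset : tsupport (cone c r) ⊆ closedBall c r :=
  closure_minimal (support_cone_subset.trans ball_subset_closedBall) isClosed_closedBall

lemma hasCompactSupport_cone [ProperSpace X] : HasCompactSupport (cone c r) :=
  (isCompact_closedBall c r).of_isClosed_subset (isClosed_tsupport _) tsupport_cone_subset

end Cone

section Perturbation

variable {E : Type*} [NormedAddCommGroup E] [NormedSpace ℝ E] [FiniteDimensional ℝ E]
  [MeasurableSpace E] [BorelSpace E] {μ : Measure E} [μ.IsAddHaarMeasure]

lemma eventually_forall_measureReal_closedBall_le [Nontrivial E] {η : ℝ} (hη : 0 < η) :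
    ∀ᶠ r in 𝓝[>] (0 : ℝ), ∀ x : E, μ.real (closedBall x r) ≤ η := by
  have hlim : Tendsto (fun r : ℝ => r ^ Module.finrank ℝ E * μ.real (ball (0 : E) 1))
      (𝓝 0) (𝓝 0) := by
    have hcont : Continuous fun r : ℝ => r ^ Module.finrank ℝ E * μ.real (ball (0 : E) 1) := by
      fun_prop
    simpa [zero_pow Module.finrank_pos.ne'] using hcont.tendsto 0
  filter_upwards [(hlim.eventually (ge_mem_nhds hη)).filter_mono nhdsWithin_le_nhds,
    self_mem_nhdsWithin] with r hr hr0 x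
  rwa [Measure.addHaar_real_closedBall μ x (le_of_lt hr0)]

lemma integral_norm_fderiv_sq_mul_cone_le (t : ℝ≥0) (c : E) (r : ℝ) :
    ∫ x, ‖fderiv ℝ (fun y => (t : ℝ) * cone c r y) x‖ ^ 2 ∂μ ≤ μ.real (closedBall c r) * t ^ 2 := by
  simpa using ((lipschitzWith_cone c r).const_mul t).integral_norm_fderiv_sq_le
    measurableSet_closedBall measure_closedBall_lt_top.ne
    (tsupport_mul_subset_right.trans tsupport_cone_subset)

lemma integral_sq_mul_cone_le (t : ℝ) (c : E) {r : ℝ} (hr0 : 0 ≤ r) (hr1 : r ≤ 1) :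
    ∫ x, (t * cone c r x) ^ 2 ∂μ ≤ μ.real (closedBall c r) * t ^ 2 := by
  refine integral_le_measureReal_mul measurableSet_closedBall measure_closedBall_lt_top.ne
    (fun _ => sq_nonneg _) fun x => ?_
  by_cases hx : x ∈ closedBall c r
  · rw [indicator_of_mem hx, mul_pow]
    have h : cone c r x ^ 2 ≤ 1 := by
      nlinarith [cone_le (c := c) (x := x) hr0, cone_nonneg (c := c) (r := r) (x := x)]
    nlinarith [sq_nonneg t]
  · rw [indicator_of_notMem hx,
      cone_eq_zero (le_of_lt (not_le.1 fun h => hx (mem_closedBall.2 h)))]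
    simp

end Perturbation

section Construction

variable {E : Type*} [NormedAddCommGroup E] [NormedSpace ℝ E]

lemma exists_ball_subset_near_compl {Ω : Set E} (hΩc : Ωᶜ.Nonempty) {p : E} {r : ℝ}
    (hr : 0 < r) (h3r : 3 * r < infDist p Ωᶜ) :
    ∃ x₀, ball x₀ (2 * r) ⊆ Ω ∧ r < dist p x₀ ∧ ∃ z ∉ Ω, dist x₀ z < 3 * r := by
  obtain ⟨z, hz⟩ := hΩc
  obtain ⟨x₀, hx₀⟩ : 2 * r ∈ range (infDist · Ωᶜ) :=
    intermediate_value_univ z p (continuous_infDist_pt _)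
      ⟨by rw [infDist_zero_of_mem hz]; positivity, by linarith⟩
  simp only at hx₀
  refine ⟨x₀, hx₀ ▸ ball_infDist_compl_subset, ?_,
    (infDist_lt_iff ⟨z, hz⟩).1 (by linarith : infDist x₀ Ωᶜ < 3 * r)⟩
  linarith [infDist_le_infDist_add_dist (x := p) (y := x₀) (s := Ωᶜ)]

lemma exists_lipschitz_integral_mul_eq_zero [Nontrivial E] [ProperSpace E] [MeasurableSpace E]
    [BorelSpace E] {μ : Measure E} [μ.IsOpenPosMeasure] [IsFiniteMeasureOnCompacts μ] {Ω : Set E}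
    (hΩo : IsOpen Ω) (hΩn : Ω.Nonempty) {g : E → ℝ} (hgm : AEStronglyMeasurable g μ)
    (hg : ∀ᵐ x ∂μ, 0 < g x ∧ g x ≤ 1) :
    ∃ u : E → ℝ, (∃ K, LipschitzWith K u) ∧ (∀ x ∉ Ω, u x = 0) ∧ (∃ p, u p ≠ 0) ∧
      ∫ x, u x * g x ∂μ = 0 := by
  obtain ⟨y, hy⟩ := hΩn
  obtain ⟨ε, hε, hball⟩ := Metric.isOpen_iff.1 hΩo y hy
  obtain ⟨w, hw⟩ := exists_norm_eq E (by positivity : 0 ≤ ε / 2)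
  set r := ε / 4 with hr
  set I₁ := ∫ x, cone y r x * g x ∂μ
  set I₂ := ∫ x, cone (y + w) r x * g x ∂μ
  have hint (c : E) : Integrable (fun x => cone c r x * g x) μ :=
    integrable_mul_of_ae_le_one (lipschitzWith_cone c r).continuous hasCompactSupport_cone hgm hg
  have hI₂ : 0 < I₂ := integral_mul_pos_of_ae_pos (lipschitzWith_cone _ r).continuous
    hasCompactSupport_cone (fun _ => cone_nonneg) (by rw [cone_self (by positivity)]; positivity) hgm hg
  have hy₂ : cone (y + w) r y = 0 := cone_eq_zero (by rw [dist_self_add_right, hw, hr]; linarith)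
  have hout : ∀ x ∉ Ω, cone y r x = 0 ∧ cone (y + w) r x = 0 := fun x hx => by
    have hxy : ε ≤ dist x y := not_lt.1 fun h => hx (hball h)
    refine ⟨cone_eq_zero (by linarith), cone_eq_zero ?_⟩
    linarith [dist_triangle x (y + w) y, dist_self_add_left w y, hw]
  refine ⟨fun x => I₂ * cone y r x - I₁ * cone (y + w) r x,
    ⟨_, ((lipschitzWith_cone y r).const_mul I₂).sub ((lipschitzWith_cone _ r).const_mul I₁)⟩,
    fun x hx => by simp [(hout x hx).1, (hout x hx).2], ⟨y, ?_⟩, ?_⟩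
  · simp only [hy₂, cone_self (by positivity : 0 ≤ r), mul_zero, sub_zero]
    exact mul_ne_zero hI₂.ne' (by positivity)
  · calc ∫ x, (I₂ * cone y r x - I₁ * cone (y + w) r x) * g x ∂μ
        = ∫ x, (I₂ * (cone y r x * g x) - I₁ * (cone (y + w) r x * g x)) ∂μ := by
          congr with x; ring
      _ = 0 := by
          rw [integral_sub ((hint y).const_mul _) ((hint _).const_mul _), integral_const_mul,
            integral_const_mul]
          ring

variable [Nontrivial E] [FiniteDimensional ℝ E] [MeasurableSpace E] [BorelSpace E] {μ : Measure E}
  [μ.IsAddHaarMeasure] {Ω : Set E}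

lemma exists_small_ball_near_compl (hΩo : IsOpen Ω) (hΩb : Bornology.IsBounded Ω) {p : E}
    (hp : p ∈ Ω) {η : ℝ} (hη : 0 < η) :
    ∃ r x₀, 0 < r ∧ r ≤ 1 ∧ μ.real (closedBall x₀ r) ≤ η ∧ ball x₀ (2 * r) ⊆ Ω ∧
      r < dist p x₀ ∧ ∃ z ∉ Ω, dist x₀ z < 3 * r := by
  have hΩc : Ωᶜ.Nonempty := nonempty_compl.2 fun h => NormedSpace.unbounded_univ ℝ E (h ▸ hΩb)
  have hρ : 0 < infDist p Ωᶜ :=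
    (hΩo.isClosed_compl.notMem_iff_infDist_pos hΩc).1 (not_not.2 hp)
  obtain ⟨r, ⟨hr1, h3r⟩, hvol, hr : 0 < r⟩ :=
    (((eventually_le_nhds one_pos).and (eventually_lt_nhds (by linarith : 0 < infDist p Ωᶜ / 3))
      |>.filter_mono nhdsWithin_le_nhds).and
      ((eventually_forall_measureReal_closedBall_le (μ := μ) hη).and self_mem_nhdsWithin)).exists
  obtain ⟨x₀, hx₀⟩ := exists_ball_subset_near_compl hΩc hr (by linarith [h3r])
  exact ⟨r, x₀, hr, hr1, hvol x₀, hx₀⟩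

lemma exists_signChanging_rayleighQuotient_le (hΩo : IsOpen Ω) (hΩb : Bornology.IsBounded Ω)
    {K : ℝ≥0} {u : E → ℝ} (hu : LipschitzWith K u) (hΩu : ∀ x ∉ Ω, u x = 0) {p : E}
    (hp : 0 < u p) {ε : ℝ} (hε : 0 < ε) :
    ∃ v : E → ℝ, (∃ K', LipschitzWith K' v) ∧ (∀ x ∉ Ω, v x = 0) ∧ (∃ p, 0 < v p) ∧
      (∃ q, v q < 0) ∧ rayleighQuotient μ v ≤ rayleighQuotient μ u + ε := by
  have hcu : HasCompactSupport u := hΩb.hasCompactSupport hΩu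
  have hD : 0 < ∫ x, u x ^ 2 ∂μ :=
    (hu.continuous.pow 2).integral_pos_of_hasCompactSupport_nonneg_nonzero
      (hcu.comp_left (zero_pow two_ne_zero)) (fun _ => sq_nonneg _) (pow_ne_zero 2 hp.ne')
  obtain ⟨η, hη, hpert⟩ := exists_pos_forall_rayleighQuotient_sub_le hu hcu hD hε
  -- `x₀` will lie within `3 r` of `Ωᶜ`, so `u x₀ ≤ 3 K r < t r = t * cone x₀ r x₀`
  set t : ℝ≥0 := 3 * K + 1
  have ht : (0 : ℝ) < t := by positivity
  obtain ⟨r, x₀, hr, hr1, hvol, hball, hpx₀, z, hz, hx₀z⟩ :=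
    exists_small_ball_near_compl (μ := μ) hΩo hΩb (by_contra fun h => hp.ne' (hΩu p h))
      (div_pos hη (pow_pos ht 2))
  have hcone : ∀ x ∉ ball x₀ r, cone x₀ r x = 0 := fun x hx =>
    Function.notMem_support.1 fun h => hx (support_cone_subset h)
  have hsmall : μ.real (closedBall x₀ r) * t ^ 2 ≤ η := (le_div_iff₀ (pow_pos ht 2)).1 hvol
  refine ⟨fun x => u x - t * cone x₀ r x, ⟨_, hu.sub ((lipschitzWith_cone x₀ r).const_mul t)⟩,
    fun x hx => ?_, ⟨p, ?_⟩, ⟨x₀, ?_⟩, hpert _ _ ((lipschitzWith_cone x₀ r).const_mul t)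
      hasCompactSupport_cone.mul_left ((integral_norm_fderiv_sq_mul_cone_le t x₀ r).trans hsmall)
      ((integral_sq_mul_cone_le t x₀ hr.le hr1).trans hsmall)⟩
  · dsimp only
    rw [hΩu x hx, hcone x fun h => hx (hball (ball_subset_ball (by linarith) h))]
    simp
  · dsimp only
    rw [hcone p (by simpa [dist_comm] using hpx₀.le)]
    simpa using hp
  · have hux₀ : u x₀ ≤ K * (3 * r) := by
      have := hu.dist_le_mul x₀ z
      rw [hΩu z hz, Real.dist_eq, sub_zero] at this
      exact (le_abs_self _).trans (this.trans (by gcongr))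
    dsimp only
    rw [cone_self hr.le]
    push_cast [t]
    nlinarith

end Construction

lemma norm_gradient {F : Type*} [NormedAddCommGroup F] [InnerProductSpace ℝ F] [CompleteSpace F]
    (u : F → ℝ) (x : F) : ‖gradient u x‖ = ‖fderiv ℝ u x‖ :=
  LinearIsometryEquiv.norm_map _ _

section Eigenvalues

variable {d : ℕ} {Ω : Set (EuclideanSpace ℝ (Fin d))} {u : EuclideanSpace ℝ (Fin d) → ℝ}
  {g : EuclideanSpace ℝ (Fin d) → ℝ}

lemma rayleigh_eq_rayleighQuotient (u : EuclideanSpace ℝ (Fin d) → ℝ) :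
    rayleigh d u = rayleighQuotient volume u := by
  simp only [rayleigh, rayleighQuotient, norm_gradient]

lemma rayleigh_nonneg (u : EuclideanSpace ℝ (Fin d) → ℝ) : 0 ≤ rayleigh d u :=
  div_nonneg (integral_nonneg fun _ => sq_nonneg _) (integral_nonneg fun _ => sq_nonneg _)

lemma dirichletEV_le_rayleigh (hu : IsDirTrial d Ω u) : dirichletEV d Ω ≤ rayleigh d u :=
  csInf_le ⟨0, by rintro _ ⟨v, -, rfl⟩; exact rayleigh_nonneg v⟩ ⟨u, hu, rfl⟩

lemma twistedEV_le_rayleigh (hu : IsDirTrial d Ω u) (hug : ∫ x, u x * g x = 0) :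
    twistedEV d Ω g ≤ rayleigh d u :=
  csInf_le ⟨0, by rintro _ ⟨v, -, -, rfl⟩; exact rayleigh_nonneg v⟩ ⟨u, hu, hug, rfl⟩

lemma twistedEV_nonneg : 0 ≤ twistedEV d Ω g :=
  Real.sInf_nonneg (by rintro _ ⟨v, -, -, rfl⟩; exact rayleigh_nonneg v)

lemma isDirTrial_of_ne_zero (hu : ∃ K, LipschitzWith K u) (hΩu : ∀ x ∉ Ω, u x = 0) {p}
    (hp : u p ≠ 0) : IsDirTrial d Ω u :=
  ⟨hu, hΩu, fun h => hp (congrFun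
    ((hu.choose_spec.continuous.ae_eq_iff_eq volume continuous_const).1 h) p)⟩

lemma IsDirTrial.exists_rayleigh_lt_dirichletEV_add (hu : IsDirTrial d Ω u) {ε : ℝ}
    (hε : 0 < ε) : ∃ v, IsDirTrial d Ω v ∧ rayleigh d v < dirichletEV d Ω + ε := by
  obtain ⟨_, ⟨v, hv, rfl⟩, hlt⟩ := Real.lt_sInf_add_pos
    (s := {r | ∃ u, IsDirTrial d Ω u ∧ rayleigh d u = r}) ⟨_, u, hu, rfl⟩ hε
  exact ⟨v, hv, hlt⟩

variable [NeZero d]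

lemma dirichletEV_le_twistedEV (hΩo : IsOpen Ω) (hΩn : Ω.Nonempty) (hgm : Measurable g)
    (hg : ∀ᵐ x, 0 < g x ∧ g x ≤ 1) : dirichletEV d Ω ≤ twistedEV d Ω g := by
  obtain ⟨u, hK, hΩu, ⟨p, hp⟩, hug⟩ :=
    exists_lipschitz_integral_mul_eq_zero hΩo hΩn hgm.aestronglyMeasurable hg
  refine le_csInf ⟨_, u, isDirTrial_of_ne_zero hK hΩu hp, hug, rfl⟩ ?_
  rintro _ ⟨v, hv, -, rfl⟩
  exact dirichletEV_le_rayleigh hv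

lemma IsDirTrial.exists_signChanging (hΩo : IsOpen Ω) (hΩb : Bornology.IsBounded Ω)
    (hu : IsDirTrial d Ω u) {ε : ℝ} (hε : 0 < ε) :
    ∃ v, IsDirTrial d Ω v ∧ (∃ p, 0 < v p) ∧ (∃ q, v q < 0) ∧ rayleigh d v ≤ rayleigh d u + ε := by
  obtain ⟨⟨K, hK⟩, hΩu, hne⟩ := hu
  obtain ⟨p, hp⟩ : ∃ p, u p ≠ 0 := by
    by_contra! h
    exact hne (.of_forall h)
  obtain ⟨v, hv, hΩv, ⟨p', hp'⟩, hq, hR⟩ : ∃ v : EuclideanSpace ℝ (Fin d) → ℝ,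
      (∃ K', LipschitzWith K' v) ∧ (∀ x ∉ Ω, v x = 0) ∧ (∃ p, 0 < v p) ∧ (∃ q, v q < 0) ∧
      rayleighQuotient volume v ≤ rayleighQuotient volume u + ε := by
    rcases hp.lt_or_gt with hneg | hpos
    · rw [← rayleighQuotient_neg]
      exact exists_signChanging_rayleighQuotient_le hΩo hΩb hK.neg
        (fun x hx => by simp [hΩu x hx]) (neg_pos.2 hneg) hε
    · exact exists_signChanging_rayleighQuotient_le hΩo hΩb hK hΩu hpos hε
  refine ⟨v, isDirTrial_of_ne_zero hv hΩv hp'.ne', ⟨p', hp'⟩, hq, ?_⟩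
  simpa only [rayleigh_eq_rayleighQuotient] using hR

lemma exists_twistedEV_le_dirichletEV_add (hΩo : IsOpen Ω) (hΩb : Bornology.IsBounded Ω)
    (hΩn : Ω.Nonempty) {ε : ℝ} (hε : 0 < ε) :
    ∃ g, Measurable g ∧ (∀ᵐ x, 0 < g x ∧ g x ≤ 1) ∧ twistedEV d Ω g ≤ dirichletEV d Ω + ε := by
  obtain ⟨u, hK, hΩu, ⟨p, hp⟩, -⟩ := exists_lipschitz_integral_mul_eq_zero (μ := volume) hΩo hΩn
    aestronglyMeasurable_const (.of_forall fun _ => ⟨one_pos, le_rfl⟩)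
  obtain ⟨u, hu, hlt⟩ :=
    (isDirTrial_of_ne_zero hK hΩu hp).exists_rayleigh_lt_dirichletEV_add (half_pos hε)
  obtain ⟨v, hv, ⟨p, hp⟩, ⟨q, hq⟩, hR⟩ := hu.exists_signChanging hΩo hΩb (half_pos hε)
  obtain ⟨g, hgm, hg, hvg⟩ := exists_weight_integral_mul_eq_zero (μ := volume)
    hv.1.choose_spec.continuous (hΩb.hasCompactSupport hv.2.1) hp hq
  refine ⟨g, hgm, .of_forall hg, ?_⟩
  linarith [twistedEV_le_rayleigh hv hvg]

end Eigenvalues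

/-- the infimum of `λ₁^g(Ω)` over `g ∈ L^∞₊` equals `λ₁(Ω)`. -/
theorem stmt0 (d : ℕ) (hd : 2 ≤ d) (Ω : Set (EuclideanSpace ℝ (Fin d)))
    (hΩo : IsOpen Ω) (hΩb : Bornology.IsBounded Ω) (hΩn : Ω.Nonempty) :
    sInf { r : ℝ | ∃ g : EuclideanSpace ℝ (Fin d) → ℝ, Measurable g ∧
        (∀ᵐ x, 0 < g x ∧ g x ≤ 1) ∧ r = twistedEV d Ω g } = dirichletEV d Ω := by
  have : NeZero d := ⟨by omega⟩
  apply le_antisymm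
  · refine le_of_forall_pos_le_add fun ε hε => ?_
    obtain ⟨g, hgm, hg, hle⟩ := exists_twistedEV_le_dirichletEV_add hΩo hΩb hΩn hε
    refine le_trans (csInf_le ?_ ?_) hle
    · exact ⟨0, by rintro _ ⟨g, -, -, rfl⟩; exact twistedEV_nonneg⟩
    · exact ⟨g, hgm, hg, rfl⟩
  · refine le_csInf ?_ ?_
    · exact ⟨_, 1, measurable_const, .of_forall fun _ => ⟨one_pos, le_rfl⟩, rfl⟩
    · rintro _ ⟨g, hgm, hg, rfl⟩
      exact dirichletEV_le_twistedEV hΩo hΩn hgm hg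
end
end

section
/- Let d ≥ 2, let Ω ⊆ ℝ^d be open and bounded, let g ∈ L^∞_+, let λ, ξ ∈ ℝ, and let u : ℝ^d → ℝ be a Lipschitz function with u = 0 on ℝ^d \ Ω, u not a.e. zero, ∫_{ℝ^d} u g dx = 0, and satisfying ∫_{ℝ^d} ∇u·∇ψ dx = λ ∫_{ℝ^d} u ψ dx + ξ ∫_{ℝ^d} g ψ dx for every Lipschitz ψ : ℝ^d → ℝ with ψ = 0 on ℝ^d \ Ω. Then u⁺ := max(u,0) and u⁻ := max(−u,0) are both not a.e. zero, and R(u⁺) ≤ R(u⁻) if and only if ξ ≤ 0; moreover R(u⁺) = R(u⁻) if and only if ξ = 0. -/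
open MeasureTheory Metric Set Filter

open scoped Classical ENNReal

noncomputable section

/-!
Testing the weak equation against `u⁺` and `u⁻` gives
`∫ |∇u^±|² = λ ∫ (u^±)² ± ξ ∫ g u^±`, because `∇u · ∇u^± = ±|∇u^±|²` and `u u^± = ±(u^±)²`
pointwise. Hence `R(u^±) = λ ± ξ A_±` with `A_± = ∫ g u^± / ∫ (u^±)² > 0`; positivity of the
`A_±` needs both `u^±` to be nonzero, which follows from `∫ u g = 0` and `g > 0`.
-/

section Gradient

variable {E : Type*} [NormedAddCommGroup E] [InnerProductSpace ℝ E] [CompleteSpace E]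

theorem gradient_fun_neg (u : E → ℝ) (x : E) :
    gradient (fun y => -u y) x = -gradient u x := by
  simp only [gradient, fderiv_fun_neg, map_neg]

theorem gradient_max_zero_eq_zero_or_eq {u : E → ℝ} {x : E} (hu : ContinuousAt u x) :
    gradient (fun y => max (u y) 0) x = 0 ∨ gradient (fun y => max (u y) 0) x = gradient u x := by
  rcases lt_trichotomy (u x) 0 with hneg | hzero | hpos
  · left
    have hloc : (fun y => max (u y) 0) =ᶠ[nhds x] fun _ => 0 := by
      filter_upwards [hu.eventually_lt continuousAt_const hneg] with y hy
      exact max_eq_right hy.le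
    rw [hloc.gradient_eq, gradient_fun_const]
  · left
    by_cases hdiff : DifferentiableAt ℝ (fun y => max (u y) 0) x
    · have hmin : IsLocalMin (fun y => max (u y) 0) x :=
        Eventually.of_forall fun y => by simp [hzero]
      simp [gradient, hmin.fderiv_eq_zero]
    · exact gradient_eq_zero_of_not_differentiableAt hdiff
  · right
    refine EventuallyEq.gradient_eq ?_
    filter_upwards [continuousAt_const.eventually_lt hu hpos] with y hy
    exact max_eq_left hy.le

theorem inner_gradient_gradient_max_zero {u : E → ℝ} {x : E} (hu : ContinuousAt u x) :
    inner ℝ (gradient u x) (gradient (fun y => max (u y) 0) x) =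
      ‖gradient (fun y => max (u y) 0) x‖ ^ 2 := by
  rcases gradient_max_zero_eq_zero_or_eq hu with h | h <;> rw [h]
  · simp
  · exact real_inner_self_eq_norm_sq _

end Gradient

theorem mul_max_zero_eq_sq (a : ℝ) : a * max a 0 = max a 0 ^ 2 := by
  rcases le_total a 0 with h | h <;> simp [h, sq]

section Integral

variable {α : Type*} [MeasurableSpace α] {μ : Measure α}

theorem integral_pos_of_ae_nonneg_of_not_ae_eq_zero {f : α → ℝ} (hf : 0 ≤ᵐ[μ] f)
    (hfi : Integrable f μ) (hne : ¬ f =ᵐ[μ] 0) : 0 < ∫ x, f x ∂μ :=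
  (integral_nonneg_of_ae hf).lt_of_ne' fun h =>
    hne ((integral_eq_zero_iff_of_nonneg_ae hf hfi).mp h)

theorem ae_eq_zero_of_ae_nonneg_of_integral_mul_eq_zero {u g : α → ℝ}
    (hg : ∀ᵐ x ∂μ, 0 < g x) (hug : Integrable (fun x => u x * g x) μ)
    (horth : ∫ x, u x * g x ∂μ = 0) (hu : 0 ≤ᵐ[μ] u) : u =ᵐ[μ] 0 := by
  have hnonneg : 0 ≤ᵐ[μ] fun x => u x * g x := by
    filter_upwards [hu, hg] with x hux hgx using mul_nonneg hux hgx.le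
  filter_upwards [(integral_eq_zero_iff_of_nonneg_ae hnonneg hug).mp horth, hg] with x hx hgx
  exact (mul_eq_zero.mp hx).resolve_right hgx.ne'

theorem not_ae_eq_zero_max_neg_zero {u g : α → ℝ} (hg : ∀ᵐ x ∂μ, 0 < g x)
    (hug : Integrable (fun x => u x * g x) μ) (horth : ∫ x, u x * g x ∂μ = 0)
    (hne : ¬ u =ᵐ[μ] 0) : ¬ (fun x => max (-u x) 0) =ᵐ[μ] 0 := fun h =>
  hne <| ae_eq_zero_of_ae_nonneg_of_integral_mul_eq_zero hg hug horth <| by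
    filter_upwards [h] with x hx
    exact neg_nonpos.mp ((le_max_left _ _).trans hx.le)

end Integral

theorem HasCompactSupport.of_eq_zero_of_notMem_bounded {E β : Type*} [PseudoMetricSpace E]
    [ProperSpace E] [Zero β] {Ω : Set E} (hΩ : Bornology.IsBounded Ω) {f : E → β}
    (hf : ∀ x ∉ Ω, f x = 0) : HasCompactSupport f :=
  HasCompactSupport.intro hΩ.isCompact_closure fun x hx => hf x fun h => hx (subset_closure h)

section Eigenfunction

variable {d : ℕ} {Ω : Set (EuclideanSpace ℝ (Fin d))}
  {g u : EuclideanSpace ℝ (Fin d) → ℝ} {lam ξ : ℝ}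

/-- `u` solves `-Δu = λ u + ξ g` weakly in `Ω` with Dirichlet boundary conditions. -/
def IsWeakTwistedEigenfunction (Ω : Set (EuclideanSpace ℝ (Fin d)))
    (g : EuclideanSpace ℝ (Fin d) → ℝ) (lam ξ : ℝ)
    (u : EuclideanSpace ℝ (Fin d) → ℝ) : Prop :=
  ∀ ψ : EuclideanSpace ℝ (Fin d) → ℝ, (∃ K, LipschitzWith K ψ) →
    (∀ x ∉ Ω, ψ x = 0) →
    (∫ x, (inner ℝ (gradient u x) (gradient ψ x) : ℝ)) =
      lam * (∫ x, u x * ψ x) + ξ * ∫ x, g x * ψ x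

theorem IsWeakTwistedEigenfunction.neg (h : IsWeakTwistedEigenfunction Ω g lam ξ u) :
    IsWeakTwistedEigenfunction Ω g lam (-ξ) (fun x => -u x) := by
  intro ψ hψ hψΩ
  simp only [gradient_fun_neg, inner_neg_left, neg_mul, integral_neg, h ψ hψ hψΩ]
  ring

theorem IsWeakTwistedEigenfunction.exists_pos_rayleigh_max_zero_eq
    (h : IsWeakTwistedEigenfunction Ω g lam ξ u) (hΩ : Bornology.IsBounded Ω)
    (hgm : Measurable g) {c : ℝ} (hg_pos : ∀ᵐ x, 0 < g x) (hg_bdd : ∀ᵐ x, ‖g x‖ ≤ c)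
    (hu : ∃ K, LipschitzWith K u) (huΩ : ∀ x ∉ Ω, u x = 0)
    (hne : ¬ (fun x => max (u x) 0) =ᵐ[volume] 0) :
    ∃ A > 0, rayleigh d (fun x => max (u x) 0) = lam + ξ * A := by
  obtain ⟨K, hK⟩ := hu
  set v : EuclideanSpace ℝ (Fin d) → ℝ := fun x => max (u x) 0
  have hvΩ : ∀ x ∉ Ω, v x = 0 := fun x hx => by simp [v, huΩ x hx]
  have hv_cont : Continuous v := (hK.max_const 0).continuous
  have hv_int : Integrable v :=
    hv_cont.integrable_of_hasCompactSupport (.of_eq_zero_of_notMem_bounded hΩ hvΩ)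
  have hv_sq_int : Integrable fun x => v x ^ 2 :=
    (hv_cont.pow 2).integrable_of_hasCompactSupport
      (.of_eq_zero_of_notMem_bounded hΩ fun x hx => by rw [Pi.pow_apply, hvΩ x hx]; norm_num)
  have hv_sq : 0 < ∫ x, v x ^ 2 := by
    refine integral_pos_of_ae_nonneg_of_not_ae_eq_zero (ae_of_all _ fun x => sq_nonneg _)
      hv_sq_int fun h0 => hne ?_
    filter_upwards [h0] with x hx using pow_eq_zero_iff two_ne_zero |>.mp hx
  have hgv : 0 < ∫ x, g x * v x := by
    refine integral_pos_of_ae_nonneg_of_not_ae_eq_zero ?_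
      (hv_int.bdd_mul hgm.aestronglyMeasurable hg_bdd) fun h0 => hne ?_
    · filter_upwards [hg_pos] with x hx using mul_nonneg hx.le (le_max_right _ _)
    · filter_upwards [h0, hg_pos] with x hx hgx using (mul_eq_zero.mp hx).resolve_left hgx.ne'
  have hinner : ∀ x, inner ℝ (gradient u x) (gradient v x) = ‖gradient v x‖ ^ 2 :=
    fun _ => inner_gradient_gradient_max_zero hK.continuous.continuousAt
  have hsq : ∀ x, u x * v x = v x ^ 2 := fun x => mul_max_zero_eq_sq (u x)
  have hweak := h v ⟨K, hK.max_const 0⟩ hvΩ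
  simp only [hinner, hsq] at hweak
  refine ⟨(∫ x, g x * v x) / ∫ x, v x ^ 2, div_pos hgv hv_sq, ?_⟩
  rw [rayleigh, hweak]
  field_simp

end Eigenfunction

theorem stmt7_general (d : ℕ) (Ω : Set (EuclideanSpace ℝ (Fin d)))
    (hΩb : Bornology.IsBounded Ω)
    (g : EuclideanSpace ℝ (Fin d) → ℝ) (hgm : Measurable g)
    (hg : ∀ᵐ x, 0 < g x ∧ g x ≤ 1)
    (lam ξ : ℝ) (u : EuclideanSpace ℝ (Fin d) → ℝ)
    (hulip : ∃ K, LipschitzWith K u) (huz : ∀ x ∉ Ω, u x = 0)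
    (hune : ¬ (u =ᵐ[volume] fun _ => (0 : ℝ)))
    (huorth : (∫ x, u x * g x) = 0)
    (hweak : ∀ ψ : EuclideanSpace ℝ (Fin d) → ℝ, (∃ K, LipschitzWith K ψ) →
      (∀ x ∉ Ω, ψ x = 0) →
      (∫ x, (inner ℝ (gradient u x) (gradient ψ x) : ℝ)) =
        lam * (∫ x, u x * ψ x) + ξ * ∫ x, g x * ψ x) :
    ¬ ((fun x => max (u x) 0) =ᵐ[volume] fun _ => (0 : ℝ)) ∧
    ¬ ((fun x => max (-u x) 0) =ᵐ[volume] fun _ => (0 : ℝ)) ∧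
    (rayleigh d (fun x => max (u x) 0) ≤ rayleigh d (fun x => max (-u x) 0) ↔ ξ ≤ 0) ∧
    (rayleigh d (fun x => max (u x) 0) = rayleigh d (fun x => max (-u x) 0) ↔ ξ = 0) := by
  have hweak : IsWeakTwistedEigenfunction Ω g lam ξ u := hweak
  obtain ⟨K, hK⟩ := hulip
  have hg_pos : ∀ᵐ x, 0 < g x := hg.mono fun x hx => hx.1
  have hg_bdd : ∀ᵐ x, ‖g x‖ ≤ 1 :=
    hg.mono fun x hx => (Real.norm_of_nonneg hx.1.le).trans_le hx.2
  have hug : Integrable fun x => u x * g x :=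
    (hK.continuous.integrable_of_hasCompactSupport
      (.of_eq_zero_of_notMem_bounded hΩb huz)).mul_bdd hgm.aestronglyMeasurable hg_bdd
  have hpos : ¬ (fun x => max (u x) 0) =ᵐ[volume] 0 := by
    simpa only [neg_neg] using not_ae_eq_zero_max_neg_zero (u := fun x => -u x) hg_pos
      (by simpa only [neg_mul] using hug.fun_neg)
      (by simp only [neg_mul, integral_neg, huorth, neg_zero])
      fun h => hune (by filter_upwards [h] with x hx using neg_eq_zero.mp hx)
  have hneg := not_ae_eq_zero_max_neg_zero hg_pos hug huorth hune
  obtain ⟨A, hA, hRpos⟩ :=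
    hweak.exists_pos_rayleigh_max_zero_eq hΩb hgm hg_pos hg_bdd ⟨K, hK⟩ huz hpos
  obtain ⟨B, hB, hRneg⟩ := hweak.neg.exists_pos_rayleigh_max_zero_eq hΩb hgm hg_pos hg_bdd
    ⟨K, hK.neg⟩ (fun x hx => by simp [huz x hx]) hneg
  refine ⟨hpos, hneg, ?_, ?_⟩ <;> rw [hRpos, hRneg]
  · constructor <;> intro h <;> nlinarith
  · constructor
    · intro h; nlinarith
    · rintro rfl; ring

/-- the sign of the nonlocal multiplier `ξ` is characterized by the comparison
between the Rayleigh quotients of the positive and negative parts of the eigenfunction. -/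
theorem stmt7 (d : ℕ) (hd : 2 ≤ d) (Ω : Set (EuclideanSpace ℝ (Fin d)))
    (hΩo : IsOpen Ω) (hΩb : Bornology.IsBounded Ω)
    (g : EuclideanSpace ℝ (Fin d) → ℝ) (hgm : Measurable g)
    (hg : ∀ᵐ x, 0 < g x ∧ g x ≤ 1)
    (lam ξ : ℝ) (u : EuclideanSpace ℝ (Fin d) → ℝ)
    (hulip : ∃ K, LipschitzWith K u) (huz : ∀ x ∉ Ω, u x = 0)
    (hune : ¬ (u =ᵐ[volume] fun _ => (0 : ℝ)))
    (huorth : (∫ x, u x * g x) = 0)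
    (hweak : ∀ ψ : EuclideanSpace ℝ (Fin d) → ℝ, (∃ K, LipschitzWith K ψ) →
      (∀ x ∉ Ω, ψ x = 0) →
      (∫ x, (inner ℝ (gradient u x) (gradient ψ x) : ℝ)) =
        lam * (∫ x, u x * ψ x) + ξ * ∫ x, g x * ψ x) :
    ¬ ((fun x => max (u x) 0) =ᵐ[volume] fun _ => (0 : ℝ)) ∧
    ¬ ((fun x => max (-u x) 0) =ᵐ[volume] fun _ => (0 : ℝ)) ∧
    (rayleigh d (fun x => max (u x) 0) ≤ rayleigh d (fun x => max (-u x) 0) ↔ ξ ≤ 0) ∧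
    (rayleigh d (fun x => max (u x) 0) = rayleigh d (fun x => max (-u x) 0) ↔ ξ = 0) :=
  stmt7_general d Ω hΩb g hgm hg lam ξ u hulip huz hune huorth hweak
end
end
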